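/- The reduction ⇒ = ⇒_{β_v} ∪ ⇒⊕ of the call-by-value probabilistic λ-calculus Λ⊕^cbv is confluent. -/

import Mathlib

open scoped NNReal ENNReal

/-- A (raw) multidistribution on `X`: a finite multiset of weighted elements. -/
abbrev MDist (X : Type) := Multiset (ℝ≥0 × X)

namespace MDist

/-- Scalar multiplication of a multidistribution. -/
def scale {X : Type} (p : ℝ≥0) (m : MDist X) : MDist X :=
  m.map fun q => (p * q.1, q.2)

/-- The singleton multidistribution `[1 M]`. -/
def single {X : Type} (M : X) : MDist X := {(1, M)}

/-- A multidistribution is proper when every weight lies in `(0,1]` and the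
weights sum to at most `1`. -/
def Proper {X : Type} (m : MDist X) : Prop :=
  (∀ q ∈ m, 0 < q.1 ∧ q.1 ≤ 1) ∧ (m.map Prod.fst).sum ≤ 1

/-- The probability that the distribution associated to a multidistribution
assigns to an event `A`. -/
noncomputable def mass {X : Type} (m : MDist X) (A : Set X) : ℝ≥0∞ :=
  (m.map fun q => A.indicator (fun _ => (q.1 : ℝ≥0∞)) q.2).sum

end MDist

/-- One component of the lifting: either keep the term or perform a step. -/
def LiftTerm {X : Type} (r : X → MDist X → Prop) (M : X) (m : MDist X) : Prop :=
  m = MDist.single M ∨ r M m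

/-- The lifting of a relation `r ⊆ X × MDist X` to a binary relation on
multidistributions. -/
inductive Lift {X : Type} (r : X → MDist X → Prop) : MDist X → MDist X → Prop
  | nil : Lift r 0 0
  | cons {p : ℝ≥0} {M : X} {m s t : MDist X} :
      LiftTerm r M m → Lift r s t → Lift r ((p, M) ::ₘ s) (MDist.scale p m + t)
/-- Terms of `Λ⊕` (de Bruijn representation). -/
inductive Term : Type
  | var : ℕ → Term
  | lam : Term → Term
  | app : Term → Term → Term
  | choice : Term → Term → Term
deriving DecidableEq

namespace Term

/-- Shifting of de Bruijn indices above a cutoff. -/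
def liftAux (c : ℕ) : Term → Term
  | var k => if k < c then var k else var (k + 1)
  | lam M => lam (liftAux (c + 1) M)
  | app M N => app (liftAux c M) (liftAux c N)
  | choice M N => choice (liftAux c M) (liftAux c N)

/-- Capture-avoiding substitution `M[N/j]`. -/
def subst : Term → ℕ → Term → Term
  | var k, j, N => if k = j then N else if j < k then var (k - 1) else var k
  | lam M, j, N => lam (subst M (j + 1) (liftAux 0 N))
  | app M P, j, N => app (subst M j N) (subst P j N)
  | choice M P, j, N => choice (subst M j N) (subst P j N)

/-- Values: variables and abstractions. -/
inductive IsValue : Term → Prop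
  | var (n : ℕ) : IsValue (var n)
  | lam (M : Term) : IsValue (lam M)

/-- `β_v`-reduction, closed under arbitrary contexts. -/
inductive BetaStep : Term → Term → Prop
  | beta {M V : Term} : IsValue V → BetaStep (app (lam M) V) (subst M 0 V)
  | appL {M M' N : Term} : BetaStep M M' → BetaStep (app M N) (app M' N)
  | appR {M N N' : Term} : BetaStep N N' → BetaStep (app M N) (app M N')
  | lam {M M' : Term} : BetaStep M M' → BetaStep (lam M) (lam M')
  | chL {M M' N : Term} : BetaStep M M' → BetaStep (choice M N) (choice M' N)
  | chR {M N N' : Term} : BetaStep N N' → BetaStep (choice M N) (choice M N')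

/-- Surface `β_v`-reduction: closure under surface contexts `S ::= □ | MS | SM`. -/
inductive SurfBetaStep : Term → Term → Prop
  | beta {M V : Term} : IsValue V → SurfBetaStep (app (lam M) V) (subst M 0 V)
  | appL {M M' N : Term} : SurfBetaStep M M' → SurfBetaStep (app M N) (app M' N)
  | appR {M N N' : Term} : SurfBetaStep N N' → SurfBetaStep (app M N) (app M N')

/-- `PlusStep M A B` holds when `M = S(P ⊕ Q)`, `A = S(P)`, `B = S(Q)` for a
surface context `S ::= □ | MS | SM`. -/
inductive PlusStep : Term → Term → Term → Prop
  | choice {M N : Term} : PlusStep (choice M N) M N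
  | appL {M A B N : Term} : PlusStep M A B → PlusStep (app M N) (app A N) (app B N)
  | appR {M N A B : Term} : PlusStep N A B → PlusStep (app M N) (app M A) (app M B)

end Term

open Term

/-- The reduction `→_{β_v} ⊆ Λ⊕ × MDST(Λ⊕)`. -/
def betaRed (M : Term) (m : MDist Term) : Prop :=
  ∃ N, BetaStep M N ∧ m = MDist.single N

/-- The probabilistic reduction `→_⊕ ⊆ Λ⊕ × MDST(Λ⊕)`. -/
def plusRed (M : Term) (m : MDist Term) : Prop :=
  ∃ A B, PlusStep M A B ∧ m = {((1 : ℝ≥0) / 2, A), ((1 : ℝ≥0) / 2, B)}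

/-- The full reduction `→ = →_{β_v} ∪ →_⊕`. -/
def red (M : Term) (m : MDist Term) : Prop := betaRed M m ∨ plusRed M m

/-- Surface reduction `→ₛ`: β_v and ⊕ rules closed under surface contexts. -/
def surfRed (M : Term) (m : MDist Term) : Prop :=
  (∃ N, SurfBetaStep M N ∧ m = MDist.single N) ∨ plusRed M m

/-- A step is deep when it is not a surface step. -/
def deepRed (M : Term) (m : MDist Term) : Prop := red M m ∧ ¬ surfRed M m

/-!
Following Tait and Martin-Löf, a `⇒`-step factors as a lifted parallel `β_v`-step followed by
a lifted `⊕`-step, and a parallel step is a sequence of `β_v`-steps; so `⇒*` is also the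
reflexive-transitive closure of the union of the two lifted relations. That union has the diamond
property: parallel `β_v` is diamond on terms, two surface `⊕`-redexes of a term either coincide or
sit in disjoint positions, and parallel `β_v` commutes with surface `⊕`. Lifting acts
componentwise on multidistributions, so these squares on terms lift to squares on
multidistributions, and confluence follows from the diamond property.
-/

namespace Term

theorem liftAux_liftAux_of_le (M : Term) {c c' : ℕ} (h : c ≤ c') :
    liftAux c (liftAux c' M) = liftAux (c' + 1) (liftAux c M) := by
  induction M generalizing c c' with
  | var k => grind [liftAux]
  | lam M ih => simp only [liftAux, ih (Nat.succ_le_succ h)]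
  | app M N ihM ihN => simp only [liftAux, ihM h, ihN h]
  | choice M N ihM ihN => simp only [liftAux, ihM h, ihN h]

theorem liftAux_subst_of_le (M N : Term) {c j : ℕ} (h : j ≤ c) :
    liftAux c (subst M j N) = subst (liftAux (c + 1) M) j (liftAux c N) := by
  induction M generalizing c j N with
  | var k => grind [liftAux, subst]
  | lam M ih =>
    simp only [subst, liftAux, ih _ (Nat.succ_le_succ h), liftAux_liftAux_of_le N (Nat.zero_le c)]
  | app M P ihM ihP => simp only [subst, liftAux, ihM _ h, ihP _ h]
  | choice M P ihM ihP => simp only [subst, liftAux, ihM _ h, ihP _ h]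

theorem liftAux_subst_of_ge (M N : Term) {c j : ℕ} (h : c ≤ j) :
    liftAux c (subst M j N) = subst (liftAux c M) (j + 1) (liftAux c N) := by
  induction M generalizing c j N with
  | var k => grind [liftAux, subst]
  | lam M ih =>
    simp only [subst, liftAux, ih _ (Nat.succ_le_succ h), liftAux_liftAux_of_le N (Nat.zero_le c)]
  | app M P ihM ihP => simp only [subst, liftAux, ihM _ h, ihP _ h]
  | choice M P ihM ihP => simp only [subst, liftAux, ihM _ h, ihP _ h]

@[simp]
theorem subst_liftAux_self (M N : Term) (i : ℕ) : subst (liftAux i M) i N = M := by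
  induction M generalizing i N with
  | var k => grind [liftAux, subst]
  | lam M ih => simp only [liftAux, subst, ih]
  | app M P ihM ihP => simp only [liftAux, subst, ihM, ihP]
  | choice M P ihM ihP => simp only [liftAux, subst, ihM, ihP]

theorem subst_subst_of_le (M V N : Term) {i j : ℕ} (h : i ≤ j) :
    subst (subst M i V) j N = subst (subst M (j + 1) (liftAux i N)) i (subst V j N) := by
  induction M generalizing i j V N with
  | var k => grind [subst, subst_liftAux_self]
  | lam M ih =>
    simp only [subst, ih _ _ (Nat.succ_le_succ h), liftAux_liftAux_of_le N (Nat.zero_le i),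
      liftAux_subst_of_ge V N (Nat.zero_le j)]
  | app M P ihM ihP => simp only [subst, ihM _ _ h, ihP _ _ h]
  | choice M P ihM ihP => simp only [subst, ihM _ _ h, ihP _ _ h]

end Term

namespace Term

open Relation

theorem IsValue.liftAux {V : Term} (hV : IsValue V) (c : ℕ) : IsValue (liftAux c V) := by
  cases hV with
  | var n => simp only [Term.liftAux]; split_ifs <;> exact .var _
  | lam M => exact .lam _

theorem IsValue.subst {V : Term} (hV : IsValue V) (j : ℕ) {N : Term} (hN : IsValue N) :
    IsValue (Term.subst V j N) := by
  cases hV with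
  | var n => simp only [Term.subst]; split_ifs <;> first | exact hN | exact .var _
  | lam M => exact .lam _

inductive Par : Term → Term → Prop
  | var (n : ℕ) : Par (var n) (var n)
  | lam {M M'} : Par M M' → Par (lam M) (lam M')
  | app {M M' N N'} : Par M M' → Par N N' → Par (app M N) (app M' N')
  | choice {M M' N N'} : Par M M' → Par N N' → Par (choice M N) (choice M' N')
  | beta {M M' V V'} : IsValue V → Par M M' → Par V V' →
      Par (app (lam M) V) (subst M' 0 V')

namespace Par

@[refl]
theorem refl (M : Term) : Par M M := by
  induction M with
  | var n => exact .var n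
  | lam M ih => exact .lam ih
  | app M N ihM ihN => exact .app ihM ihN
  | choice M N ihM ihN => exact .choice ihM ihN

theorem isValue {V V' : Term} (h : Par V V') (hV : IsValue V) : IsValue V' := by
  cases hV <;> cases h <;> constructor

theorem liftAux {M M' : Term} (h : Par M M') (c : ℕ) : Par (liftAux c M) (liftAux c M') := by
  induction h generalizing c with
  | var n => exact refl _
  | lam _ ih => exact .lam (ih (c + 1))
  | app _ _ ihM ihN => exact .app (ihM c) (ihN c)
  | choice _ _ ihM ihN => exact .choice (ihM c) (ihN c)
  | @beta M M' V V' hV _ _ ihM ihV =>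
    rw [liftAux_subst_of_le M' V' (Nat.zero_le c)]
    exact .beta (hV.liftAux c) (ihM (c + 1)) (ihV c)

theorem subst {M M' N N' : Term} (h : Par M M') (hNN : Par N N') (hN : IsValue N) (j : ℕ) :
    Par (subst M j N) (subst M' j N') := by
  induction h generalizing j N N' with
  | var n => simp only [Term.subst]; split_ifs <;> first | exact hNN | exact refl _
  | lam _ ih => exact .lam (ih (hNN.liftAux 0) (hN.liftAux 0) (j + 1))
  | app _ _ ihM ihN => exact .app (ihM hNN hN j) (ihN hNN hN j)
  | choice _ _ ihM ihN => exact .choice (ihM hNN hN j) (ihN hNN hN j)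
  | @beta M M' V V' hV _ _ ihM ihV =>
    rw [subst_subst_of_le M' V' N' (Nat.zero_le j)]
    exact .beta (hV.subst j hN) (ihM (hNN.liftAux 0) (hN.liftAux 0) (j + 1)) (ihV hNN hN j)

theorem diamond {M N₁ N₂ : Term} (h₁ : Par M N₁) (h₂ : Par M N₂) :
    ∃ N, Par N₁ N ∧ Par N₂ N := by
  induction h₁ generalizing N₂ with
  | var n => cases h₂; exact ⟨_, .var n, .var n⟩
  | lam _ ih =>
    cases h₂ with
    | lam h₂ => obtain ⟨P, hP₁, hP₂⟩ := ih h₂; exact ⟨_, .lam hP₁, .lam hP₂⟩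
  | app hM hN ihM ihN =>
    cases h₂ with
    | app hM₂ hN₂ =>
      obtain ⟨P, hP₁, hP₂⟩ := ihM hM₂
      obtain ⟨Q, hQ₁, hQ₂⟩ := ihN hN₂
      exact ⟨_, .app hP₁ hQ₁, .app hP₂ hQ₂⟩
    | beta hV hM₂ hV₂ =>
      cases hM with
      | lam _ =>
        obtain ⟨_, hP₁, hP₂⟩ := ihM (.lam hM₂)
        obtain ⟨Q, hQ₁, hQ₂⟩ := ihN hV₂
        cases hP₁ with | lam hP₁ =>
        cases hP₂ with | lam hP₂ =>
        exact ⟨_, .beta (hN.isValue hV) hP₁ hQ₁, hP₂.subst hQ₂ (hV₂.isValue hV) 0⟩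
  | choice _ _ ihM ihN =>
    cases h₂ with
    | choice hM₂ hN₂ =>
      obtain ⟨P, hP₁, hP₂⟩ := ihM hM₂
      obtain ⟨Q, hQ₁, hQ₂⟩ := ihN hN₂
      exact ⟨_, .choice hP₁ hQ₁, .choice hP₂ hQ₂⟩
  | beta hV _ hVV ihM ihV =>
    cases h₂ with
    | app hM₂ hN₂ =>
      cases hM₂ with
      | lam hM₂ =>
        obtain ⟨P, hP₁, hP₂⟩ := ihM hM₂
        obtain ⟨Q, hQ₁, hQ₂⟩ := ihV hN₂
        exact ⟨_, hP₁.subst hQ₁ (hVV.isValue hV) 0, .beta (hN₂.isValue hV) hP₂ hQ₂⟩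
    | beta _ hM₂ hV₂ =>
      obtain ⟨P, hP₁, hP₂⟩ := ihM hM₂
      obtain ⟨Q, hQ₁, hQ₂⟩ := ihV hV₂
      exact ⟨_, hP₁.subst hQ₁ (hVV.isValue hV) 0, hP₂.subst hQ₂ (hV₂.isValue hV) 0⟩

end Par

theorem BetaStep.par {M N : Term} (h : BetaStep M N) : Par M N := by
  induction h with
  | beta hV => exact .beta hV (.refl _) (.refl _)
  | appL _ ih => exact .app ih (.refl _)
  | appR _ ih => exact .app (.refl _) ih
  | lam _ ih => exact .lam ih
  | chL _ ih => exact .choice ih (.refl _)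
  | chR _ ih => exact .choice (.refl _) ih

theorem reflTransGen_betaStep_app {M M' N N' : Term} (hM : ReflTransGen BetaStep M M')
    (hN : ReflTransGen BetaStep N N') : ReflTransGen BetaStep (app M N) (app M' N') :=
  (hM.lift (app · N) fun _ _ => .appL).trans (hN.lift (app M') fun _ _ => .appR)

theorem reflTransGen_betaStep_choice {M M' N N' : Term} (hM : ReflTransGen BetaStep M M')
    (hN : ReflTransGen BetaStep N N') : ReflTransGen BetaStep (choice M N) (choice M' N') :=
  (hM.lift (choice · N) fun _ _ => .chL).trans (hN.lift (choice M') fun _ _ => .chR)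

theorem Par.reflTransGen_betaStep {M N : Term} (h : Par M N) : ReflTransGen BetaStep M N := by
  induction h with
  | var n => rfl
  | lam _ ih => exact ih.lift Term.lam fun _ _ => .lam
  | app _ _ ihM ihN => exact reflTransGen_betaStep_app ihM ihN
  | choice _ _ ihM ihN => exact reflTransGen_betaStep_choice ihM ihN
  | beta hV _ hVV ihM ihV =>
    exact (reflTransGen_betaStep_app (ihM.lift Term.lam fun _ _ => .lam) ihV).tail
      (.beta (hVV.isValue hV))

end Term

namespace Term

theorem PlusStep.eq_or_disjoint {M A B A' B' : Term} (h : PlusStep M A B) (h' : PlusStep M A' B') :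
    (A = A' ∧ B = B') ∨
      ∃ C₁ C₂ C₃ C₄, PlusStep A C₁ C₂ ∧ PlusStep B C₃ C₄ ∧
        PlusStep A' C₁ C₃ ∧ PlusStep B' C₂ C₄ := by
  induction h generalizing A' B' with
  | choice => cases h'; exact .inl ⟨rfl, rfl⟩
  | appL h ih =>
    cases h' with
    | appL h' =>
      rcases ih h' with ⟨rfl, rfl⟩ | ⟨_, _, _, _, h₁, h₂, h₃, h₄⟩
      · exact .inl ⟨rfl, rfl⟩
      · exact .inr ⟨_, _, _, _, .appL h₁, .appL h₂, .appL h₃, .appL h₄⟩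
    | appR h' => exact .inr ⟨_, _, _, _, .appR h', .appR h', .appL h, .appL h⟩
  | appR h ih =>
    cases h' with
    | appL h' => exact .inr ⟨_, _, _, _, .appL h', .appL h', .appR h, .appR h⟩
    | appR h' =>
      rcases ih h' with ⟨rfl, rfl⟩ | ⟨_, _, _, _, h₁, h₂, h₃, h₄⟩
      · exact .inl ⟨rfl, rfl⟩
      · exact .inr ⟨_, _, _, _, .appR h₁, .appR h₂, .appR h₃, .appR h₄⟩

/-- A surface `⊕`-redex is never a `β_v`-redex, so a parallel step cannot destroy it. -/
theorem PlusStep.par {M A B N : Term} (h : PlusStep M A B) (hMN : Par M N) :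
    ∃ A' B', PlusStep N A' B' ∧ Par A A' ∧ Par B B' := by
  induction h generalizing N with
  | choice => cases hMN with | choice hA hB => exact ⟨_, _, .choice, hA, hB⟩
  | appL h ih =>
    cases hMN with
    | app hM hN =>
      obtain ⟨_, _, h', hA, hB⟩ := ih hM
      exact ⟨_, _, .appL h', .app hA hN, .app hB hN⟩
    | beta => cases h
  | appR h ih =>
    cases hMN with
    | app hM hN =>
      obtain ⟨_, _, h', hA, hB⟩ := ih hN
      exact ⟨_, _, .appR h', .app hM hA, .app hM hB⟩
    | beta hV => cases hV <;> cases h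

end Term

namespace MDist

variable {X : Type}

theorem scale_add (p : ℝ≥0) (m n : MDist X) : scale p (m + n) = scale p m + scale p n :=
  Multiset.map_add _ _ _

theorem scale_scale (p q : ℝ≥0) (m : MDist X) : scale p (scale q m) = scale (p * q) m := by
  simp [scale, Multiset.map_map, mul_assoc]

theorem scale_cons (p q : ℝ≥0) (M : X) (s : MDist X) :
    scale p ((q, M) ::ₘ s) = (p * q, M) ::ₘ scale p s :=
  Multiset.map_cons _ _ _

theorem scale_single_add (p : ℝ≥0) (M : X) (t : MDist X) :
    scale p (single M) + t = (p, M) ::ₘ t := by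
  simp [scale, single, Multiset.singleton_add]

end MDist

namespace Lift

open Relation

variable {X : Type} {r r₁ r₂ : X → MDist X → Prop}

theorem cons_same {p : ℝ≥0} {M : X} {s t : MDist X} (h : Lift r s t) :
    Lift r ((p, M) ::ₘ s) ((p, M) ::ₘ t) := by
  simpa only [MDist.scale_single_add] using Lift.cons (p := p) (.inl rfl) h

theorem cons_step {p : ℝ≥0} {M N : X} {s t : MDist X} (hM : r M (MDist.single N))
    (h : Lift r s t) : Lift r ((p, M) ::ₘ s) ((p, N) ::ₘ t) := by
  simpa only [MDist.scale_single_add] using Lift.cons (p := p) (.inr hM) h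

@[refl]
theorem refl (m : MDist X) : Lift r m m := by
  induction m using Multiset.induction with
  | empty => exact .nil
  | cons _ _ ih => exact ih.cons_same

theorem add {a b c d : MDist X} (h₁ : Lift r a b) (h₂ : Lift r c d) : Lift r (a + c) (b + d) := by
  induction h₁ with
  | nil => simpa using h₂
  | cons hM _ ih => rw [Multiset.cons_add, add_assoc]; exact .cons hM ih

theorem scale (p : ℝ≥0) {a b : MDist X} (h : Lift r a b) :
    Lift r (MDist.scale p a) (MDist.scale p b) := by
  induction h with
  | nil => exact .nil
  | cons hM _ ih =>
    rw [MDist.scale_cons, MDist.scale_add, MDist.scale_scale]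
    exact .cons hM ih

theorem of_rel {M : X} {m : MDist X} (h : r M m) : Lift r (MDist.single M) m := by
  simpa [MDist.single, MDist.scale] using Lift.cons (p := 1) (.inr h) (.nil (r := r))

theorem mono (hr : ∀ M m, r₁ M m → r₂ M m) {m n : MDist X} (h : Lift r₁ m n) : Lift r₂ m n := by
  induction h with
  | nil => exact .nil
  | cons hM _ ih => exact .cons (hM.imp_right (hr _ _)) ih

theorem eq_zero_of_zero {n : MDist X} (h : Lift r 0 n) : n = 0 := by
  generalize hm : (0 : MDist X) = m at h
  cases h with
  | nil => rfl
  | cons => simp at hm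

theorem of_cons {p : ℝ≥0} {M : X} {s n : MDist X} (h : Lift r ((p, M) ::ₘ s) n) :
    ∃ m t, LiftTerm r M m ∧ Lift r s t ∧ n = MDist.scale p m + t := by
  generalize hm : (p, M) ::ₘ s = m at h
  induction h generalizing s with
  | nil => simp at hm
  | @cons q N m' s' t' hN hs ih =>
    rcases Multiset.cons_eq_cons.mp hm with ⟨h₁, rfl⟩ | ⟨-, u, rfl, hu⟩
    · obtain ⟨rfl, rfl⟩ := Prod.mk.inj h₁
      exact ⟨m', t', hN, hs, rfl⟩
    · obtain ⟨m, t, hM, ht, rfl⟩ := ih hu.symm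
      exact ⟨m, MDist.scale q m' + t, hM, .cons hN ht, add_left_comm _ _ _⟩

theorem commute
    (H : ∀ M m₁ m₂, LiftTerm r₁ M m₁ → LiftTerm r₂ M m₂ → ∃ n, Lift r₂ m₁ n ∧ Lift r₁ m₂ n)
    {m n₁ n₂ : MDist X} (h₁ : Lift r₁ m n₁) (h₂ : Lift r₂ m n₂) :
    ∃ n, Lift r₂ n₁ n ∧ Lift r₁ n₂ n := by
  induction h₁ generalizing n₂ with
  | nil => exact ⟨0, .nil, by rw [h₂.eq_zero_of_zero]⟩
  | @cons p M m₁ s t₁ hM _ ih =>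
    obtain ⟨m₂, t₂, hM₂, ht₂, rfl⟩ := h₂.of_cons
    obtain ⟨n, hn₁, hn₂⟩ := H M m₁ m₂ hM hM₂
    obtain ⟨t, ht₁, ht₂⟩ := ih ht₂
    exact ⟨MDist.scale p n + t, (hn₁.scale p).add ht₁, (hn₂.scale p).add ht₂⟩

theorem exists_of_or {m n : MDist X} (h : Lift (fun M m => r₁ M m ∨ r₂ M m) m n) :
    ∃ k, Lift r₁ m k ∧ Lift r₂ k n := by
  induction h with
  | nil => exact ⟨0, .nil, .nil⟩
  | @cons p M m s t hM _ ih =>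
    obtain ⟨k, hk₁, hk₂⟩ := ih
    rcases hM with rfl | hM | hM
    · exact ⟨_, hk₁.cons_same, by rw [MDist.scale_single_add]; exact hk₂.cons_same⟩
    · exact ⟨_, .cons (.inr hM) hk₁, (Lift.refl _).add hk₂⟩
    · exact ⟨_, hk₁.cons_same, .cons (.inr hM) hk₂⟩

theorem reflTransGen_of_rel {r' : X → MDist X → Prop}
    (hr : ∀ M m, r M m → ReflTransGen (Lift r') (MDist.single M) m) {m n : MDist X}
    (h : Lift r m n) : ReflTransGen (Lift r') m n := by
  induction h with
  | nil => rfl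
  | @cons p M m s t hM _ ih =>
    have hM' : ReflTransGen (Lift r') (MDist.single M) m := by
      rcases hM with rfl | hM
      · rfl
      · exact hr M m hM
    rw [← MDist.scale_single_add]
    exact (hM'.lift (MDist.scale p · + s) fun _ _ h => (h.scale p).add (.refl s)).trans
      (ih.lift (MDist.scale p m + ·) fun _ _ h => (Lift.refl _).add h)

end Lift

theorem Multiset.pair_add_pair_comm {α : Type*} (a b c d : α) :
    ({a, b} : Multiset α) + {c, d} = {a, c} + {b, d} := by
  simp only [Multiset.insert_eq_cons, ← Multiset.singleton_add, add_add_add_comm]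

theorem MDist.scale_pair {X : Type} (p q q' : ℝ≥0) (A B : X) :
    MDist.scale p {(q, A), (q', B)} = {(p * q, A), (p * q', B)} := by
  simp [MDist.scale]

section Confluence

open Relation Term

def parRed (M : Term) (m : MDist Term) : Prop := ∃ N, Par M N ∧ m = MDist.single N

theorem parRed_of_liftTerm {M : Term} {m : MDist Term} (h : LiftTerm parRed M m) :
    parRed M m :=
  h.elim (fun h => ⟨M, .refl M, h⟩) id

theorem parRed_square (M : Term) (m₁ m₂ : MDist Term) (h₁ : LiftTerm parRed M m₁)
    (h₂ : LiftTerm parRed M m₂) : ∃ n, Lift parRed m₁ n ∧ Lift parRed m₂ n := by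
  obtain ⟨N₁, hN₁, rfl⟩ := parRed_of_liftTerm h₁
  obtain ⟨N₂, hN₂, rfl⟩ := parRed_of_liftTerm h₂
  obtain ⟨N, h₁, h₂⟩ := hN₁.diamond hN₂
  exact ⟨_, .of_rel ⟨N, h₁, rfl⟩, .of_rel ⟨N, h₂, rfl⟩⟩

theorem plusRed_square (M : Term) (m₁ m₂ : MDist Term) (h₁ : LiftTerm plusRed M m₁)
    (h₂ : LiftTerm plusRed M m₂) : ∃ n, Lift plusRed m₁ n ∧ Lift plusRed m₂ n := by
  rcases h₁ with rfl | ⟨A, B, hAB, rfl⟩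
  · exact ⟨m₂, h₂.elim (fun h => h ▸ .refl _) .of_rel, .refl _⟩
  rcases h₂ with rfl | ⟨A', B', hAB', rfl⟩
  · exact ⟨_, .refl _, .of_rel ⟨A, B, hAB, rfl⟩⟩
  rcases hAB.eq_or_disjoint hAB' with ⟨rfl, rfl⟩ | ⟨C₁, C₂, C₃, C₄, h₁, h₂, h₃, h₄⟩
  · exact ⟨_, .refl _, .refl _⟩
  refine ⟨MDist.scale (1 / 2) {(1 / 2, C₁), (1 / 2, C₂)} +
    (MDist.scale (1 / 2) {(1 / 2, C₃), (1 / 2, C₄)} + 0),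
    .cons (.inr ⟨_, _, h₁, rfl⟩) (.cons (.inr ⟨_, _, h₂, rfl⟩) .nil), ?_⟩
  -- each corner `C₁ … C₄` carries weight `1/4`; regroup them along the other redex
  rw [add_zero, MDist.scale_pair, MDist.scale_pair, Multiset.pair_add_pair_comm,
    ← MDist.scale_pair, ← MDist.scale_pair, ← add_zero (MDist.scale _ {_, (_, C₄)})]
  exact .cons (.inr ⟨_, _, h₃, rfl⟩) (.cons (.inr ⟨_, _, h₄, rfl⟩) .nil)

theorem parRed_plusRed_square (M : Term) (m₁ m₂ : MDist Term) (h₁ : LiftTerm parRed M m₁)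
    (h₂ : LiftTerm plusRed M m₂) : ∃ n, Lift plusRed m₁ n ∧ Lift parRed m₂ n := by
  obtain ⟨N, hMN, rfl⟩ := parRed_of_liftTerm h₁
  rcases h₂ with rfl | ⟨A, B, hAB, rfl⟩
  · exact ⟨_, .refl _, .of_rel ⟨N, hMN, rfl⟩⟩
  obtain ⟨A', B', hAB', hA, hB⟩ := hAB.par hMN
  have hpar : Lift parRed ((1 / 2, A) ::ₘ {(1 / 2, B)}) ((1 / 2, A') ::ₘ {(1 / 2, B')}) :=
    .cons_step ⟨A', hA, rfl⟩ (.cons_step ⟨B', hB, rfl⟩ .nil)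
  exact ⟨_, .of_rel ⟨A', B', hAB', rfl⟩, hpar⟩

def parOrPlus (m n : MDist Term) : Prop := Lift parRed m n ∨ Lift plusRed m n

theorem parOrPlus_diamond {m n₁ n₂ : MDist Term} (h₁ : parOrPlus m n₁) (h₂ : parOrPlus m n₂) :
    ∃ n, parOrPlus n₁ n ∧ parOrPlus n₂ n := by
  rcases h₁ with h₁ | h₁ <;> rcases h₂ with h₂ | h₂
  · obtain ⟨n, h₁, h₂⟩ := Lift.commute parRed_square h₁ h₂; exact ⟨n, .inl h₁, .inl h₂⟩
  · obtain ⟨n, h₁, h₂⟩ := Lift.commute parRed_plusRed_square h₁ h₂; exact ⟨n, .inr h₁, .inl h₂⟩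
  · obtain ⟨n, h₂, h₁⟩ := Lift.commute parRed_plusRed_square h₂ h₁; exact ⟨n, .inl h₁, .inr h₂⟩
  · obtain ⟨n, h₁, h₂⟩ := Lift.commute plusRed_square h₁ h₂; exact ⟨n, .inr h₁, .inr h₂⟩

theorem reflTransGen_betaStep_single {M N : Term} (h : ReflTransGen BetaStep M N) :
    ReflTransGen (Lift red) (MDist.single M) (MDist.single N) :=
  h.lift MDist.single fun _ N h => .of_rel (.inl ⟨N, h, rfl⟩)

theorem reflTransGen_lift_red_eq : ReflTransGen (Lift red) = ReflTransGen parOrPlus := by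
  refine le_antisymm (reflTransGen_closed fun m n h => ?_) (reflTransGen_closed fun m n h => ?_)
  · have h' : Lift (fun M m => parRed M m ∨ plusRed M m) m n :=
      h.mono fun _ _ => Or.imp_left fun ⟨N, hN, e⟩ => ⟨N, hN.par, e⟩
    obtain ⟨k, hk₁, hk₂⟩ := h'.exists_of_or
    exact .tail (.single (.inl hk₁)) (.inr hk₂)
  · rcases h with h | h
    · exact h.reflTransGen_of_rel fun _ _ ⟨_, hN, e⟩ =>
        e ▸ reflTransGen_betaStep_single hN.reflTransGen_betaStep
    · exact .single (h.mono fun _ _ => .inr)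

/-- The reduction `⇒ = ⇒_{β_v} ∪ ⇒⊕` of `Λ⊕^cbv` is confluent. -/
theorem cbv_confluent :
    ∀ a b c : MDist Term, Relation.ReflTransGen (Lift red) a b →
      Relation.ReflTransGen (Lift red) a c →
      ∃ d, Relation.ReflTransGen (Lift red) b d ∧
        Relation.ReflTransGen (Lift red) c d := by
  intro a b c hab hac
  rw [reflTransGen_lift_red_eq] at hab hac ⊢
  refine church_rosser (fun _ _ _ h₁ h₂ => ?_) hab hac
  obtain ⟨d, hd₁, hd₂⟩ := parOrPlus_diamond h₁ h₂
  exact ⟨d, .single hd₁, .single hd₂⟩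

end Confluence
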